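/- For every randomized algorithm on the hardness instance (not necessarily 1-consistent), its expected competitive ratio conditional on candidate 2 arriving first (i.e. on π(1) = 2) is at most ε + 2·(1−ε)/(r−1) + (1−ε)·((r−3)/(r−1))·(1/2 + 1/(2s)). -/
import Mathlib


open Finset

/-- Value of candidate `j` in row `i` of the hardness construction (rows indexed `1..r`):
row 1 is `(s, 1, 1)`; for `m ≥ 1`, rows `2m` and `2m+1` contain `s^{m+1}, s^{m+2}` in
columns 2,3, arranged according to the parity of `m`. -/
noncomputable def rowVal (s : ℝ) (i : ℕ) : Fin 3 → ℝ :=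
  if i = 1 then ![s, 1, 1]
  else if (i % 2 = 0 ↔ (i / 2) % 2 = 1) then ![s, s ^ (i / 2 + 1), s ^ (i / 2 + 2)]
  else ![s, s ^ (i / 2 + 2), s ^ (i / 2 + 1)]

/-- Probability that row `i` is realized: row 1 with probability `ε`, each of the other
`r - 1` rows with probability `(1-ε)/(r-1)`. -/
noncomputable def rowProb (ε : ℝ) (r : ℕ) (i : ℕ) : ℝ :=
  if i = 1 then ε else (1 - ε) / ((r : ℝ) - 1)

/-- The competitive ratio obtained by the randomized algorithm `(a₁, a₂)` on value
vector `v` when the arrival order is `π` (candidate `π t` arrives at time `t`),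
averaged over the algorithm's internal randomness. -/
noncomputable def ratio (a₁ : Fin 3 × ℝ → ℝ) (a₂ : (Fin 3 × ℝ) × (Fin 3 × ℝ) → ℝ)
    (v : Fin 3 → ℝ) (π : Equiv.Perm (Fin 3)) : ℝ :=
  let x : Fin 3 → ℝ := fun t => v (π t)
  let M : ℝ := max (v 0) (max (v 1) (v 2))
  let p1 := a₁ (π 0, x 0)
  let p2 := a₂ ((π 0, x 0), (π 1, x 1))
  p1 * (x 0 / M) + (1 - p1) * (p2 * (x 1 / M) + (1 - p2) * (x 2 / M))

/-- The overall expected competitive ratio `ρ`: expectation over the random row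
`I ∈ {1, …, r}` and the uniformly random arrival order `π`. -/
noncomputable def rho (s ε : ℝ) (r : ℕ) (a₁ : Fin 3 × ℝ → ℝ)
    (a₂ : (Fin 3 × ℝ) × (Fin 3 × ℝ) → ℝ) : ℝ :=
  ∑ i ∈ Finset.Icc 1 r, rowProb ε r i *
    ((1 / 6) * ∑ π : Equiv.Perm (Fin 3), ratio a₁ a₂ (rowVal s i) π)

/-- The algorithm is 1-consistent: its expected competitive ratio conditional on
row 1 (the predicted row) being realized equals 1. -/
noncomputable def Consistent (s : ℝ) (a₁ : Fin 3 × ℝ → ℝ)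
    (a₂ : (Fin 3 × ℝ) × (Fin 3 × ℝ) → ℝ) : Prop :=
  (1 / 6) * ∑ π : Equiv.Perm (Fin 3), ratio a₁ a₂ (rowVal s 1) π = 1
/-- The expected competitive ratio conditional on candidate `c` arriving first:
the arrival order is uniform over the two permutations `π` with `π 0 = c`, and the
row `I ∈ {1, …, r}` is drawn according to `rowProb`. -/
noncomputable def condRho (s ε : ℝ) (r : ℕ) (a₁ : Fin 3 × ℝ → ℝ)
    (a₂ : (Fin 3 × ℝ) × (Fin 3 × ℝ) → ℝ) (c : Fin 3) : ℝ :=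
  (1 / 2) * ∑ π ∈ Finset.univ.filter (fun π : Equiv.Perm (Fin 3) => π 0 = c),
    ∑ i ∈ Finset.Icc 1 r, rowProb ε r i * ratio a₁ a₂ (rowVal s i) π

lemma ratio_le_one (a₁ : Fin 3 × ℝ → ℝ) (a₂ : (Fin 3 × ℝ) × (Fin 3 × ℝ) → ℝ)
    (ha₁ : ∀ o, a₁ o ∈ Set.Icc (0 : ℝ) 1) (ha₂ : ∀ o, a₂ o ∈ Set.Icc (0 : ℝ) 1)
    (v : Fin 3 → ℝ) (π : Equiv.Perm (Fin 3)) (hv : ∀ t, 0 ≤ v t) (h0 : 0 < v 0) :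
    ratio a₁ a₂ v π ≤ 1 := by
  have hM : 0 < max (v 0) (max (v 1) (v 2)) := lt_of_lt_of_le h0 (le_max_left _ _)
  have hle : ∀ t : Fin 3, v t ≤ max (v 0) (max (v 1) (v 2)) := by
    intro t
    fin_cases t
    · exact le_max_left _ _
    · exact le_trans (le_max_left _ _) (le_max_right _ _)
    · exact le_trans (le_max_right _ _) (le_max_right _ _)
  have hd1 : ∀ t, v (π t) / max (v 0) (max (v 1) (v 2)) ≤ 1 :=
    fun t => div_le_one_of_le₀ (hle _) hM.le
  have hd0 : ∀ t, 0 ≤ v (π t) / max (v 0) (max (v 1) (v 2)) :=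
    fun t => div_nonneg (hv _) hM.le
  unfold ratio
  dsimp only
  obtain ⟨hp0, hp1⟩ := ha₁ (π 0, v (π 0))
  obtain ⟨hq0, hq1⟩ := ha₂ ((π 0, v (π 0)), (π 1, v (π 1)))
  have inner : a₂ ((π 0, v (π 0)), (π 1, v (π 1))) * (v (π 1) / (v 0 ⊔ (v 1 ⊔ v 2))) +
      (1 - a₂ ((π 0, v (π 0)), (π 1, v (π 1)))) * (v (π 2) / (v 0 ⊔ (v 1 ⊔ v 2))) ≤ 1 := by
    nlinarith [hd1 1, hd1 2, hd0 1, hd0 2]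
  have inner0 : 0 ≤ a₂ ((π 0, v (π 0)), (π 1, v (π 1))) * (v (π 1) / (v 0 ⊔ (v 1 ⊔ v 2))) +
      (1 - a₂ ((π 0, v (π 0)), (π 1, v (π 1)))) * (v (π 2) / (v 0 ⊔ (v 1 ⊔ v 2))) := by
    nlinarith [hd0 1, hd0 2]
  nlinarith [hd1 0, hd0 0, mul_le_mul_of_nonneg_left inner (by linarith : (0:ℝ) ≤ 1 - a₁ (π 0, v (π 0)))]

lemma rowVal_nonneg (s : ℝ) (hs : 0 < s) (i : ℕ) (t : Fin 3) : 0 ≤ rowVal s i t := by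
  unfold rowVal
  split_ifs <;> fin_cases t <;> simp <;> positivity

lemma rowVal_zero_pos (s : ℝ) (hs : 0 < s) (i : ℕ) : 0 < rowVal s i 0 := by
  unfold rowVal; split_ifs <;> simpa using hs

lemma rowVal_down (s : ℝ) (j : ℕ) (hj : 3 ≤ j) :
    rowVal s (2*j-4+j%2) = ![s, s^j, s^(j-1)] := by
  have h0 : ¬(2*j-4+j%2 = 1) := by omega
  have h1 : ¬((2*j-4+j%2) % 2 = 0 ↔ ((2*j-4+j%2)/2) % 2 = 1) := by omega
  have h2 : (2*j-4+j%2)/2 + 2 = j := by omega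
  have h3 : (2*j-4+j%2)/2 + 1 = j-1 := by omega
  rw [rowVal, if_neg h0, if_neg h1, h2, h3]

lemma rowVal_up (s : ℝ) (j : ℕ) (hj : 3 ≤ j) :
    rowVal s (2*j-4+j%2+2) = ![s, s^j, s^(j+1)] := by
  have h0 : ¬(2*j-4+j%2+2 = 1) := by omega
  have h1 : ((2*j-4+j%2+2) % 2 = 0 ↔ ((2*j-4+j%2+2)/2) % 2 = 1) := by omega
  have h2 : (2*j-4+j%2+2)/2 + 1 = j := by omega
  have h3 : (2*j-4+j%2+2)/2 + 2 = j+1 := by omega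
  rw [rowVal, if_neg h0, if_pos h1, h2, h3]

lemma pair_arith (s P Q QA QB b c : ℝ) (hs : 1 < s)
    (hP0 : 0 ≤ P) (hP1 : P ≤ 1) (hQ0 : 0 ≤ Q) (hQ1 : Q ≤ 1)
    (hQA0 : 0 ≤ QA) (hQA1 : QA ≤ 1) (hQB0 : 0 ≤ QB) (hQB1 : QB ≤ 1)
    (hb0 : 0 < b) (hc0 : 0 < c) (hbs : b ≤ 1/s) (hcs : c ≤ 1/s) :
    (P * 1 + (1 - P) * (Q * b + (1 - Q) * (1/s))
       + (P * 1 + (1 - P) * (QA * (1/s) + (1 - QA) * b)))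
      + ((P * (1/s) + (1 - P) * (Q * c + (1 - Q) * 1))
       + (P * (1/s) + (1 - P) * (QB * 1 + (1 - QB) * c))) ≤ 2 + 2/s := by
  have hs0 : 0 < s := lt_trans one_pos hs
  have hinvs : 1 / s < 1 := by rw [div_lt_one hs0]; exact hs
  have hc1 : c ≤ 1 := le_trans hcs hinvs.le
  have k1 : Q * b + (1 - Q) * (1/s) ≤ 1/s := by nlinarith
  have k2 : QA * (1/s) + (1 - QA) * b ≤ 1/s := by nlinarith
  have k3 : Q * c + (1 - Q) * 1 ≤ 1 := by nlinarith
  have k4 : QB * 1 + (1 - QB) * c ≤ 1 := by nlinarith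
  have hP' : (0:ℝ) ≤ 1 - P := by linarith
  have m1 := mul_le_mul_of_nonneg_left k1 hP'
  have m2 := mul_le_mul_of_nonneg_left k2 hP'
  have m3 := mul_le_mul_of_nonneg_left k3 hP'
  have m4 := mul_le_mul_of_nonneg_left k4 hP'
  have h2s : 2 + 2/s = (P * 1 + (1-P) * (1/s) + (P * 1 + (1-P) * (1/s)))
      + ((P * (1/s) + (1-P) * 1) + (P * (1/s) + (1-P) * 1)) := by ring
  rw [h2s]
  linarith

lemma pair_ratio_bound (s : ℝ) (hs : 1 < s) (j : ℕ) (hj : 3 ≤ j)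
    (a₁ : Fin 3 × ℝ → ℝ) (a₂ : (Fin 3 × ℝ) × (Fin 3 × ℝ) → ℝ)
    (ha₁ : ∀ o, a₁ o ∈ Set.Icc (0 : ℝ) 1) (ha₂ : ∀ o, a₂ o ∈ Set.Icc (0 : ℝ) 1)
    (σ τ : Equiv.Perm (Fin 3))
    (hσ0 : σ 0 = 1) (hσ1 : σ 1 = 0) (hσ2 : σ 2 = 2)
    (hτ0 : τ 0 = 1) (hτ1 : τ 1 = 2) (hτ2 : τ 2 = 0) :
    (ratio a₁ a₂ ![s, s^j, s^(j-1)] σ + ratio a₁ a₂ ![s, s^j, s^(j-1)] τ) +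
    (ratio a₁ a₂ ![s, s^j, s^(j+1)] σ + ratio a₁ a₂ ![s, s^j, s^(j+1)] τ) ≤ 2 + 2/s := by
  have hs0 : 0 < s := lt_trans one_pos hs
  have hsne : s ≠ 0 := ne_of_gt hs0
  have hpow : ∀ m : ℕ, (0:ℝ) < s ^ m := fun m => pow_pos hs0 m
  have hmono : ∀ m n : ℕ, m ≤ n → s ^ m ≤ s ^ n := fun m n h => pow_le_pow_right₀ hs.le h
  have hsj : s ≤ s ^ j := by simpa using hmono 1 j (by omega)
  have hjj : s ^ (j-1) ≤ s ^ j := hmono _ _ (by omega)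
  have hjj1 : s ^ j ≤ s ^ (j+1) := hmono _ _ (by omega)
  have hsj1 : s ≤ s ^ (j+1) := le_trans hsj hjj1
  have hMA : max s (max (s^j) (s^(j-1))) = s ^ j := by
    rw [max_eq_left hjj, max_eq_right hsj]
  have hMB : max s (max (s^j) (s^(j+1))) = s ^ (j+1) := by
    rw [max_eq_right hjj1, max_eq_right hsj1]
  have hpj : s ^ j = s ^ (j-1) * s := by
    rw [← pow_succ]; congr 1; omega
  have hpj1 : s ^ (j+1) = s ^ j * s := by rw [← pow_succ]
  have e1 : s ^ j / s ^ j = 1 := div_self (ne_of_gt (hpow j))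
  have e2 : s ^ (j-1) / s ^ j = 1 / s := by
    rw [eq_div_iff hsne, div_mul_eq_mul_div, ← hpj, div_self (ne_of_gt (hpow j))]
  have e3 : s ^ j / s ^ (j+1) = 1 / s := by
    rw [eq_div_iff hsne, div_mul_eq_mul_div, ← hpj1, div_self (ne_of_gt (hpow (j+1)))]
  have e4 : s ^ (j+1) / s ^ (j+1) = 1 := div_self (ne_of_gt (hpow (j+1)))
  have goal_eq : (ratio a₁ a₂ ![s, s^j, s^(j-1)] σ + ratio a₁ a₂ ![s, s^j, s^(j-1)] τ) +
      (ratio a₁ a₂ ![s, s^j, s^(j+1)] σ + ratio a₁ a₂ ![s, s^j, s^(j+1)] τ) =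
      (a₁ (1, s^j) * 1 + (1 - a₁ (1, s^j)) *
          (a₂ ((1, s^j), (0, s)) * (s / s^j) + (1 - a₂ ((1, s^j), (0, s))) * (1/s))
       + (a₁ (1, s^j) * 1 + (1 - a₁ (1, s^j)) *
          (a₂ ((1, s^j), (2, s^(j-1))) * (1/s) + (1 - a₂ ((1, s^j), (2, s^(j-1)))) * (s / s^j))))
      + ((a₁ (1, s^j) * (1/s) + (1 - a₁ (1, s^j)) *
          (a₂ ((1, s^j), (0, s)) * (s / s^(j+1)) + (1 - a₂ ((1, s^j), (0, s))) * 1))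
       + (a₁ (1, s^j) * (1/s) + (1 - a₁ (1, s^j)) *
          (a₂ ((1, s^j), (2, s^(j+1))) * 1 + (1 - a₂ ((1, s^j), (2, s^(j+1)))) * (s / s^(j+1))))) := by
    unfold ratio
    dsimp only
    rw [hσ0, hσ1, hσ2, hτ0, hτ1, hτ2]
    simp only [Matrix.cons_val_zero, Matrix.cons_val_one, Matrix.head_cons,
      Matrix.cons_val_two, Matrix.tail_cons]
    rw [hMA, hMB, e1, e2, e3, e4]
  rw [goal_eq]
  have hb0 : 0 < s / s ^ j := div_pos hs0 (hpow j)
  have hc0 : 0 < s / s ^ (j+1) := div_pos hs0 (hpow (j+1))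
  have hbs : s / s ^ j ≤ 1 / s := by
    rw [div_le_div_iff₀ (hpow j) hs0]
    calc s * s = s ^ 2 := by ring
    _ ≤ s ^ j := hmono 2 j (by omega)
    _ = 1 * s ^ j := by ring
  have hcs : s / s ^ (j+1) ≤ 1 / s := by
    rw [div_le_div_iff₀ (hpow (j+1)) hs0]
    calc s * s = s ^ 2 := by ring
    _ ≤ s ^ (j+1) := hmono 2 (j+1) (by omega)
    _ = 1 * s ^ (j+1) := by ring
  exact pair_arith s _ _ _ _ _ _ hs (ha₁ _).1 (ha₁ _).2 (ha₂ _).1 (ha₂ _).2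
    (ha₂ _).1 (ha₂ _).2 (ha₂ _).1 (ha₂ _).2 hb0 hc0 hbs hcs

lemma sum_decomp (g : ℕ → ℝ) : ∀ l : ℕ, 2 ≤ l →
    ∑ i ∈ Finset.Icc 2 (4*l-1), g i =
      g 2 + g (4*l-1) + ∑ j ∈ Finset.Icc 3 (2*l), (g (2*j-4+j%2) + g (2*j-4+j%2+2)) := by
  intro l hl
  induction l, hl using Nat.le_induction with
  | base =>
    have h7 : (4*2-1 : ℕ) = 7 := by norm_num
    have hI : Finset.Icc 2 7 = {2,3,4,5,6,7} := by decide
    have hJ : Finset.Icc 3 (2*2) = {3,4} := by decide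
    rw [h7, hI, hJ]
    norm_num [Finset.sum_insert, Finset.mem_insert, Finset.mem_singleton]
    ring
  | succ l hl ih =>
    have e1 : 4*(l+1)-1 = (4*l-1)+1+1+1+1 := by omega
    have e2 : 2*(l+1) = (2*l)+1+1 := by omega
    rw [e1, Finset.sum_Icc_succ_top (by omega), Finset.sum_Icc_succ_top (by omega),
      Finset.sum_Icc_succ_top (by omega), Finset.sum_Icc_succ_top (by omega), ih,
      e2, Finset.sum_Icc_succ_top (by omega), Finset.sum_Icc_succ_top (by omega)]
    have i1 : 2*(2*l+1)-4+(2*l+1)%2 = 4*l-1 := by omega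
    have i2 : 2*(2*l+1)-4+(2*l+1)%2+2 = 4*l-1+1+1 := by omega
    have i3 : 2*(2*l+1+1)-4+(2*l+1+1)%2 = 4*l-1+1 := by omega
    have i4 : 2*(2*l+1+1)-4+(2*l+1+1)%2+2 = 4*l-1+1+1+1 := by omega
    rw [i4, i2, i3, i1]
    have j1 : 4*l-1+2+1 = 4*l-1+1+1+1 := by omega
    have j2 : 4*l-1+3+1 = 4*l-1+1+1+1+1 := by omega
    rw [j1, j2]
    ring

/-- For every randomized algorithm on the hardness instance (not
necessarily 1-consistent), the expected competitive ratio conditional on candidate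
2 arriving first is at most
`ε + 2·(1-ε)/(r-1) + (1-ε)·((r-3)/(r-1))·(1/2 + 1/(2s))` with `r = 2k - 1`.
Candidate 2 is encoded as `1 : Fin 3`. -/
theorem secretary_hardness_case_first_is_cand2 (s ε : ℝ) (k : ℕ)
    (hs : 1 < s) (hk : 4 ≤ k) (hkeven : Even k) (hε0 : 0 < ε) (hε1 : ε < 1)
    (a₁ : Fin 3 × ℝ → ℝ) (a₂ : (Fin 3 × ℝ) × (Fin 3 × ℝ) → ℝ)
    (ha₁ : ∀ o, a₁ o ∈ Set.Icc (0 : ℝ) 1) (ha₂ : ∀ o, a₂ o ∈ Set.Icc (0 : ℝ) 1) :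
    condRho s ε (2 * k - 1) a₁ a₂ 1 ≤
      ε + 2 * (1 - ε) / (((2 * k - 1 : ℕ) : ℝ) - 1) +
        (1 - ε) * ((((2 * k - 1 : ℕ) : ℝ) - 3) / (((2 * k - 1 : ℕ) : ℝ) - 1)) *
          (1 / 2 + 1 / (2 * s)) := by
  have hs0 : 0 < s := lt_trans one_pos hs
  obtain ⟨l, hkl⟩ := hkeven
  have hl2 : 2 ≤ l := by omega
  have hk4 : 2 * k - 1 = 4 * l - 1 := by omega
  rw [hk4]
  have hfilter : Finset.univ.filter (fun π : Equiv.Perm (Fin 3) => π 0 = 1) =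
      {(Equiv.swap 0 1 : Equiv.Perm (Fin 3)), finRotate 3} := by decide
  have hστ : (Equiv.swap 0 1 : Equiv.Perm (Fin 3)) ≠ finRotate 3 := by decide
  unfold condRho
  rw [hfilter, Finset.sum_pair hστ, ← Finset.sum_add_distrib]
  set g : ℕ → ℝ := fun i => ratio a₁ a₂ (rowVal s i) (Equiv.swap 0 1) +
      ratio a₁ a₂ (rowVal s i) (finRotate 3) with hg
  have hcomb : ∀ i ∈ Finset.Icc 1 (4*l-1),
      rowProb ε (4*l-1) i * ratio a₁ a₂ (rowVal s i) (Equiv.swap 0 1) +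
      rowProb ε (4*l-1) i * ratio a₁ a₂ (rowVal s i) (finRotate 3) =
      rowProb ε (4*l-1) i * g i := fun i _ => (mul_add _ _ _).symm
  rw [Finset.sum_congr rfl hcomb]
  have hIcc : Finset.Icc 1 (4*l-1) = insert 1 (Finset.Icc 2 (4*l-1)) := by
    ext x; simp only [Finset.mem_Icc, Finset.mem_insert]; omega
  rw [hIcc, Finset.sum_insert (by simp [Finset.mem_Icc])]
  have hp1 : rowProb ε (4*l-1) 1 = ε := by simp [rowProb]
  have hconst : ∀ i ∈ Finset.Icc 2 (4*l-1), rowProb ε (4*l-1) i * g i =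
      (1 - ε) / (((4*l-1 : ℕ) : ℝ) - 1) * g i := by
    intro i hi
    simp only [Finset.mem_Icc] at hi
    rw [rowProb, if_neg (by omega)]
  rw [hp1, Finset.sum_congr rfl hconst, ← Finset.mul_sum]
  clear_value g
  -- bounds
  have hg_le : ∀ i, g i ≤ 2 := by
    intro i
    have h1 := ratio_le_one a₁ a₂ ha₁ ha₂ (rowVal s i) (Equiv.swap 0 1)
      (rowVal_nonneg s hs0 i) (rowVal_zero_pos s hs0 i)
    have h2 := ratio_le_one a₁ a₂ ha₁ ha₂ (rowVal s i) (finRotate 3)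
      (rowVal_nonneg s hs0 i) (rowVal_zero_pos s hs0 i)
    rw [hg]; dsimp only; linarith
  have hσ0 : (Equiv.swap 0 1 : Equiv.Perm (Fin 3)) 0 = 1 := by decide
  have hσ1 : (Equiv.swap 0 1 : Equiv.Perm (Fin 3)) 1 = 0 := by decide
  have hσ2 : (Equiv.swap 0 1 : Equiv.Perm (Fin 3)) 2 = 2 := by decide
  have hτ0 : (finRotate 3 : Equiv.Perm (Fin 3)) 0 = 1 := by decide
  have hτ1 : (finRotate 3 : Equiv.Perm (Fin 3)) 1 = 2 := by decide
  have hτ2 : (finRotate 3 : Equiv.Perm (Fin 3)) 2 = 0 := by decide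
  have hpair : ∀ j ∈ Finset.Icc 3 (2*l), g (2*j-4+j%2) + g (2*j-4+j%2+2) ≤ 2 + 2/s := by
    intro j hj
    simp only [Finset.mem_Icc] at hj
    rw [hg]; dsimp only
    rw [rowVal_down s j hj.1, rowVal_up s j hj.1]
    exact pair_ratio_bound s hs j hj.1 a₁ a₂ ha₁ ha₂ _ _ hσ0 hσ1 hσ2 hτ0 hτ1 hτ2
  have hsum : ∑ i ∈ Finset.Icc 2 (4*l-1), g i ≤ 4 + (2*(l:ℝ) - 2) * (2 + 2/s) := by
    rw [sum_decomp g l hl2]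
    have hps : ∑ j ∈ Finset.Icc 3 (2*l), (g (2*j-4+j%2) + g (2*j-4+j%2+2)) ≤
        (2*(l:ℝ) - 2) * (2 + 2/s) := by
      calc ∑ j ∈ Finset.Icc 3 (2*l), (g (2*j-4+j%2) + g (2*j-4+j%2+2))
          ≤ ∑ _j ∈ Finset.Icc 3 (2*l), (2 + 2/s) := Finset.sum_le_sum hpair
        _ = ((Finset.Icc 3 (2*l)).card : ℝ) * (2 + 2/s) := by
            rw [Finset.sum_const, nsmul_eq_mul]
        _ = (2*(l:ℝ) - 2) * (2 + 2/s) := by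
            rw [Nat.card_Icc]
            have : (2*l + 1 - 3 : ℕ) = 2*l - 2 := by omega
            rw [this, Nat.cast_sub (by omega)]
            push_cast; ring
    have h2' := hg_le 2
    have hr' := hg_le (4*l-1)
    linarith
  -- final arithmetic
  have hcast : ((4*l-1 : ℕ) : ℝ) = 4*(l:ℝ) - 1 := by
    rw [Nat.cast_sub (by omega)]; push_cast; ring
  have hL2 : (2:ℝ) ≤ (l:ℝ) := by exact_mod_cast hl2
  have hden : 0 < 4*(l:ℝ) - 2 := by linarith
  have hcpos : 0 ≤ (1 - ε) / (((4*l-1 : ℕ) : ℝ) - 1) := by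
    rw [hcast]
    apply div_nonneg (by linarith)
    linarith
  have t1 : ε * g 1 ≤ ε * 2 := mul_le_mul_of_nonneg_left (hg_le 1) hε0.le
  have t2 : (1 - ε) / (((4*l-1 : ℕ) : ℝ) - 1) * (∑ i ∈ Finset.Icc 2 (4*l-1), g i) ≤
      (1 - ε) / (((4*l-1 : ℕ) : ℝ) - 1) * (4 + (2*(l:ℝ) - 2) * (2 + 2/s)) :=
    mul_le_mul_of_nonneg_left hsum hcpos
  have final_eq : ε + 2 * (1 - ε) / (((4*l-1 : ℕ) : ℝ) - 1) +
      (1 - ε) * ((((4*l-1 : ℕ) : ℝ) - 3) / (((4*l-1 : ℕ) : ℝ) - 1)) * (1 / 2 + 1 / (2 * s)) =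
      1/2 * (ε * 2 + (1 - ε) / (((4*l-1 : ℕ) : ℝ) - 1) * (4 + (2*(l:ℝ) - 2) * (2 + 2/s))) := by
    rw [hcast]
    have hsne : s ≠ 0 := ne_of_gt hs0
    have hdne : 4*(l:ℝ) - 1 - 1 ≠ 0 := by intro h; rw [← h] at hden; linarith
    field_simp
    ring
  rw [final_eq]
  linarith
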